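/- Let T_1, ..., T_n be commuting contractions on a complex Hilbert space H, let T = T_1 ⋯ T_n, and let H_1 be the maximal reducing subspace of T on which T is unitary. If K ⊆ H ⊖ H_1 is a nonzero joint reducing subspace of T_1, ..., T_n such that each T_i|_K is unitary, then a contradiction arises; hence H_1 is the maximal joint reducing subspace on which all T_i are simultaneously unitary. -/

import Mathlib

open ContinuousLinearMap Filter
open scoped InnerProductSpace

noncomputable section

variable {H : Type*} [NormedAddCommGroup H] [InnerProductSpace ℂ H] [CompleteSpace H]

/-- K is a reducing subspace for T. -/
def Reduces (T : H →L[ℂ] H) (K : Submodule ℂ H) : Prop :=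
  (∀ h ∈ K, T h ∈ K) ∧ (∀ h ∈ K, adjoint T h ∈ K)

/-- The restriction of T to K is a unitary of K (a surjective isometry of K). -/
def UnitaryOn (T : H →L[ℂ] H) (K : Submodule ℂ H) : Prop :=
  (∀ h ∈ K, ‖T h‖ = ‖h‖) ∧ (∀ h ∈ K, ∃ g ∈ K, T g = h)

/-- The restriction of T to K is a pure isometry (unilateral shift). -/
def PureIsometryOn (T : H →L[ℂ] H) (K : Submodule ℂ H) : Prop :=
  (∀ h ∈ K, ‖T h‖ = ‖h‖) ∧
    ∀ h ∈ K, Tendsto (fun n : ℕ => ((adjoint T) ^ n) h) atTop (nhds 0)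

/-- The restriction of T to K is completely non-unitary. -/
def CnuOn (T : H →L[ℂ] H) (K : Submodule ℂ H) : Prop :=
  ∀ L : Submodule ℂ H, L ≤ K → IsClosed (L : Set H) →
    Reduces T L → UnitaryOn T L → L = ⊥

/-! If every `T i` is unitary on a joint reducing subspace `K`, then so are all powers of the
product `T` and of its adjoint: operators mapping `K` isometrically into itself form a monoid,
and it contains each `T i` and each `adjoint (T i)`. Hence `K ≤ H1`, and `K ≤ H1ᗮ` forces
`K = ⊥`. -/

theorem star_list_prod_mem {M : Type*} [Monoid M] [StarMul M] (N : Submonoid M) {l : List M}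
    (hl : ∀ x ∈ l, star x ∈ N) : star l.prod ∈ N := by
  induction l with
  | nil => rw [List.prod_nil, star_one]; exact N.one_mem
  | cons x l ih =>
    rw [List.prod_cons, star_mul]
    exact N.mul_mem (ih fun y hy => hl y (List.mem_cons_of_mem x hy)) (hl x List.mem_cons_self)

section IsometryOn

variable {𝕜 E : Type*} [RCLike 𝕜] [NormedAddCommGroup E] [InnerProductSpace 𝕜 E]

def isometryOnSubmonoid (K : Submodule 𝕜 E) : Submonoid (E →L[𝕜] E) where
  carrier := {S | ∀ h ∈ K, S h ∈ K ∧ ‖S h‖ = ‖h‖}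
  one_mem' h hh := ⟨hh, rfl⟩
  mul_mem' {A B} hA hB h hh := by
    obtain ⟨hBK, hBnorm⟩ := hB h hh
    obtain ⟨hAK, hAnorm⟩ := hA _ hBK
    exact ⟨hAK, hAnorm.trans hBnorm⟩

theorem inner_map_map_of_norm_map_on {K : Submodule 𝕜 E} {S : E →L[𝕜] E}
    (hS : ∀ h ∈ K, ‖S h‖ = ‖h‖) {x y : E} (hx : x ∈ K) (hy : y ∈ K) :
    ⟪S x, S y⟫_𝕜 = ⟪x, y⟫_𝕜 :=
  let f : K →ₗᵢ[𝕜] E :=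
    { toLinearMap := S.toLinearMap ∘ₗ K.subtype, norm_map' := fun x => hS x x.2 }
  f.inner_map_map ⟨x, hx⟩ ⟨y, hy⟩

end IsometryOn

theorem adjoint_apply_apply_of_reduces {T : H →L[ℂ] H} {K : Submodule ℂ H}
    (hred : Reduces T K) (hiso : ∀ h ∈ K, ‖T h‖ = ‖h‖) {g : H} (hg : g ∈ K) :
    adjoint T (T g) = g := by
  have hmem : adjoint T (T g) - g ∈ K := K.sub_mem (hred.2 _ (hred.1 g hg)) hg
  have horth : ⟪adjoint T (T g) - g, adjoint T (T g) - g⟫_ℂ = 0 := by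
    rw [inner_sub_left, adjoint_inner_left, inner_map_map_of_norm_map_on hiso hg hmem, sub_self]
  exact sub_eq_zero.1 (inner_self_eq_zero.1 horth)

theorem mem_isometryOnSubmonoid_of_unitaryOn {T : H →L[ℂ] H} {K : Submodule ℂ H}
    (hred : Reduces T K) (huni : UnitaryOn T K) : T ∈ isometryOnSubmonoid K :=
  fun h hh => ⟨hred.1 h hh, huni.1 h hh⟩

theorem adjoint_mem_isometryOnSubmonoid_of_unitaryOn {T : H →L[ℂ] H} {K : Submodule ℂ H}
    (hred : Reduces T K) (huni : UnitaryOn T K) : adjoint T ∈ isometryOnSubmonoid K := by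
  intro h hh
  refine ⟨hred.2 h hh, ?_⟩
  obtain ⟨g, hg, rfl⟩ := huni.2 h hh
  rw [adjoint_apply_apply_of_reduces hred huni.1 hg, huni.1 g hg]

theorem unitary_part_maximal_joint_general
    (n : ℕ) (T : Fin n → (H →L[ℂ] H))
    (H1 : Submodule ℂ H)
    (hH1 : (H1 : Set H) = {h : H | ∀ m : ℕ, 1 ≤ m →
      ‖((List.ofFn T).prod ^ m) h‖ = ‖h‖ ∧
      ‖((adjoint (List.ofFn T).prod) ^ m) h‖ = ‖h‖})
    (K : Submodule ℂ H)
    (hKne : K ≠ ⊥)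
    (hKperp : K ≤ H1ᗮ)
    (hKred : ∀ i, Reduces (T i) K)
    (hKuni : ∀ i, UnitaryOn (T i) K) :
    False := by
  have hprod : (List.ofFn T).prod ∈ isometryOnSubmonoid K := by
    refine list_prod_mem fun S hS => ?_
    obtain ⟨i, rfl⟩ := List.mem_ofFn.1 hS
    exact mem_isometryOnSubmonoid_of_unitaryOn (hKred i) (hKuni i)
  have hprod_adj : adjoint (List.ofFn T).prod ∈ isometryOnSubmonoid K := by
    refine star_list_prod_mem _ fun S hS => ?_
    obtain ⟨i, rfl⟩ := List.mem_ofFn.1 hS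
    exact adjoint_mem_isometryOnSubmonoid_of_unitaryOn (hKred i) (hKuni i)
  have hKH1 : K ≤ H1 := fun h hh => by
    rw [← SetLike.mem_coe, hH1]
    exact fun m _ => ⟨(pow_mem hprod m h hh).2, (pow_mem hprod_adj m h hh).2⟩
  exact hKne (eq_bot_iff.2 ((le_inf hKH1 hKperp).trans (Submodule.inf_orthogonal_eq_bot H1).le))

theorem unitary_part_maximal_joint
    (n : ℕ) (T : Fin n → (H →L[ℂ] H))
    (hnorm : ∀ i, ‖T i‖ ≤ 1)
    (hcomm : ∀ i j, T i * T j = T j * T i)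
    (H1 : Submodule ℂ H)
    (hH1 : (H1 : Set H) = {h : H | ∀ m : ℕ, 1 ≤ m →
      ‖((List.ofFn T).prod ^ m) h‖ = ‖h‖ ∧
      ‖((adjoint (List.ofFn T).prod) ^ m) h‖ = ‖h‖})
    (K : Submodule ℂ H) (hKclosed : IsClosed (K : Set H))
    (hKne : K ≠ ⊥)
    (hKperp : K ≤ H1ᗮ)
    (hKred : ∀ i, Reduces (T i) K)
    (hKuni : ∀ i, UnitaryOn (T i) K) :
    False :=
  unitary_part_maximal_joint_general n T H1 hH1 K hKne hKperp hKred hKuni
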